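/- arXiv:1402.5555 — 5 statements merged into one kernel-verified Lean document; each statement's English description precedes it below -/
import Mathlib

section
/- The automorphism σ restricts to a bijection of 𝔅' onto itself. Moreover 𝔅', together with σ|_{𝔅'} and the element 1/(s+1), is universal in the following sense: for every k[s]-module M, every additive bijection τ : M → M satisfying τ(f·m) = σ(f)·τ(m) for all f ∈ k[s] and m ∈ M, and every element m₀ ∈ M satisfying (s+1)·m₀ = s·τ^{-1}(m₀), there exists a unique k[s]-linear map φ : 𝔅' → M such that φ(1/(s+1)) = m₀ and φ ∘ (σ|_{𝔅'}) = τ ∘ φ. (This expresses that 𝔅' realizes the difference module 𝔅 = 𝒟/((s+1) − T^{-1}s)𝒟, the Mellin transform of the D-module B.) -/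
open Polynomial

/-- The `k[s]`-submodule `𝔅'` of `k(s)` generated by the elements `1/(s+i)` for `i ∈ ℤ`. -/
noncomputable def Bprime (k : Type*) [Field k] : Submodule (Polynomial k) (RatFunc k) :=
  Submodule.span (Polynomial k) {x : RatFunc k | ∃ i : ℤ, x = (RatFunc.X + (i : RatFunc k))⁻¹}

/-!
`σ` acts on `k[s]` by `f ↦ f(s+1)` and sends `1/(s+i)` to `1/(s+i+1)`, so `σ` and `σ⁻¹`
preserve `𝔅'`.

The module `𝔅'` is presented by the generators `eᵢ = 1/(s+i)` subject to the relations
`(s+i)·eᵢ = (s+j)·eⱼ`: if `∑ gᵢ/(s+i) = 0`, clearing denominators and evaluating at `-i` gives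
`gᵢ(-i) = 0` (the poles are distinct in characteristic zero), so `gᵢ = qᵢ(s+i)` with `∑ qᵢ = 0`.
Hence `k[s]`-linear maps out of `𝔅'` are families `mᵢ` with all `(s+i)·mᵢ` equal. The
hypothesis on `m₀` says exactly that `c = (s+1)·m₀` is fixed by `τ`, so `mᵢ = τ^(i-1) m₀`
satisfies `(s+i)·mᵢ = τ^(i-1) c = c`; compatibility with `σ` forces `φ(eᵢ) = τ^(i-1) m₀`.
-/

theorem LinearMap.exists_comp_eq_of_surjective_of_ker_le {R M N P : Type*} [Ring R]
    [AddCommGroup M] [AddCommGroup N] [AddCommGroup P] [Module R M] [Module R N] [Module R P]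
    {f : M →ₗ[R] N} (hf : Function.Surjective f) {g : M →ₗ[R] P}
    (hfg : LinearMap.ker f ≤ LinearMap.ker g) : ∃ φ : N →ₗ[R] P, φ ∘ₗ f = g :=
  ⟨(LinearMap.ker f).liftQ g hfg ∘ₗ (f.quotKerEquivOfSurjective hf).symm.toLinearMap,
    LinearMap.ext fun x => by simp⟩

theorem zpow_smul_eq_of_forall_succ {G α : Type*} [Group G] [MulAction G α] (g : G) {x : ℤ → α}
    (hx : ∀ i, x (i + 1) = g • x i) (n : ℤ) : x n = g ^ n • x 0 := by
  induction n using Int.induction_on with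
  | zero => simp
  | succ n ih => rw [hx, ih, smul_smul, ← zpow_one_add, add_comm]
  | pred n ih =>
    have h := hx (-n - 1)
    rw [sub_add_cancel, ih] at h
    rw [← inv_smul_eq_iff.mpr h, smul_smul, ← zpow_neg_one, ← zpow_add, neg_add_eq_sub]

theorem RatFunc.algebraMap_X_add_C_intCast {k : Type*} [Field k] (i : ℤ) :
    algebraMap k[X] (RatFunc k) (Polynomial.X + Polynomial.C (i : k)) =
      RatFunc.X + (i : RatFunc k) := by
  simp

theorem RatFunc.map_algebraMap_eq_algebraMap_comp {k : Type*} [Field k]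
    (σ : RatFunc k →ₐ[k] RatFunc k) {p : k[X]} (hσ : σ RatFunc.X = algebraMap k[X] (RatFunc k) p)
    (f : k[X]) : σ (algebraMap k[X] (RatFunc k) f) = algebraMap k[X] (RatFunc k) (f.comp p) := by
  have hX : algebraMap k[X] (RatFunc k) f = aeval RatFunc.X f := by
    rw [← RatFunc.algebraMap_X, aeval_algebraMap_apply, aeval_X_left, AlgHom.id_apply]
  rw [hX, ← aeval_algHom_apply, hσ, aeval_algebraMap_apply, comp_eq_aeval]

theorem RatFunc.map_smul_eq_comp_smul {k : Type*} [Field k]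
    (σ : RatFunc k →ₐ[k] RatFunc k) {p : k[X]} (hσ : σ RatFunc.X = algebraMap k[X] (RatFunc k) p)
    (f : k[X]) (x : RatFunc k) : σ (f • x) = f.comp p • σ x := by
  rw [Algebra.smul_def, map_mul, map_algebraMap_eq_algebraMap_comp σ hσ, Algebra.smul_def]

theorem Polynomial.eval_neg_eq_zero_of_sum_smul_inv_X_add_eq_zero {k : Type*} [Field k]
    [CharZero k] (s : Finset ℤ) (g : ℤ → k[X])
    (h : ∑ i ∈ s, g i • (RatFunc.X + (i : RatFunc k))⁻¹ = 0) :
    ∀ i ∈ s, (g i).eval (-(i : k)) = 0 := by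
  classical
  intro i₀ hi₀
  have hne : ∀ i : ℤ, algebraMap k[X] (RatFunc k) (X + C (i : k)) ≠ 0 := fun i =>
    (map_ne_zero_iff _ (RatFunc.algebraMap_injective k)).mpr (X_add_C_ne_zero _)
  have hclear : ∑ i ∈ s, g i * ∏ j ∈ s.erase i, (X + C (j : k)) = 0 := by
    apply RatFunc.algebraMap_injective k
    rw [map_zero, ← zero_mul (algebraMap k[X] (RatFunc k) (∏ j ∈ s, (X + C (j : k)))), ← h,
      Finset.sum_mul, map_sum]
    refine Finset.sum_congr rfl fun i hi => ?_
    rw [← Finset.mul_prod_erase s _ hi, Algebra.smul_def, map_mul, map_mul,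
      ← RatFunc.algebraMap_X_add_C_intCast, mul_assoc, inv_mul_cancel_left₀ (hne i)]
  have heval := congrArg (eval (-(i₀ : k))) hclear
  rw [eval_zero, eval_finsetSum, Finset.sum_eq_single_of_mem i₀ hi₀] at heval
  · rw [eval_mul] at heval
    refine (mul_eq_zero.mp heval).resolve_right ?_
    rw [eval_prod]
    refine Finset.prod_ne_zero_iff.mpr fun j hj => ?_
    simpa [neg_add_eq_zero, Int.cast_inj] using (Finset.ne_of_mem_erase hj).symm
  · intro i hi hii₀
    rw [eval_mul, eval_prod, Finset.prod_eq_zero (Finset.mem_erase.mpr ⟨Ne.symm hii₀, hi₀⟩)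
      (by simp), mul_zero]

section ShiftedAutomorphism

variable {R : Type*} [CommRing R] {M : Type*} [AddCommGroup M] [Module R[X] M] {τ : M ≃+ M}
  (hτ : ∀ (f : R[X]) (m : M), τ (f • m) = f.comp (X + 1) • τ m)
include hτ

theorem symm_apply_smul_eq_comp (f : R[X]) (m : M) :
    τ.symm (f • m) = f.comp (X - 1) • τ.symm m := by
  rw [AddEquiv.symm_apply_eq, hτ, AddEquiv.apply_symm_apply, comp_assoc]
  simp

theorem zpow_apply_smul_eq_comp (n : ℤ) (f : R[X]) (m : M) :
    ((τ : M ≃ M) ^ n) (f • m) = f.comp (X + C (n : R)) • ((τ : M ≃ M) ^ n) m := by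
  induction n using Int.induction_on generalizing f m with
  | zero => simp
  | succ n ih =>
    rw [zpow_add_one, Equiv.Perm.mul_apply, Equiv.Perm.mul_apply, AddEquiv.coe_toEquiv, hτ, ih,
      comp_assoc]
    congr 2
    simp only [add_comp, X_comp, one_comp, map_intCast]
    push_cast
    ring
  | pred n ih =>
    rw [zpow_sub_one, Equiv.Perm.mul_apply, Equiv.Perm.mul_apply, Equiv.Perm.inv_def,
      AddEquiv.coe_toEquiv_symm, symm_apply_smul_eq_comp hτ, ih, comp_assoc]
    congr 2
    simp only [sub_comp, X_comp, one_comp, map_intCast]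
    push_cast
    ring

variable {m₀ : M} (hm₀ : ((X : R[X]) + 1) • m₀ = (X : R[X]) • τ.symm m₀)
include hm₀

theorem apply_X_add_one_smul : τ ((X + 1 : R[X]) • m₀) = (X + 1 : R[X]) • m₀ := by
  conv_lhs => rw [hm₀, hτ, X_comp, AddEquiv.apply_symm_apply]

theorem X_add_C_smul_zpow_apply (i : ℤ) :
    (X + C (i : R)) • ((τ : M ≃ M) ^ (i - 1)) m₀ = (X + 1 : R[X]) • m₀ := by
  have hfix : (X + 1 : R[X]) • m₀ ∈ MulAction.fixedBy M (τ : M ≃ M) :=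
    apply_X_add_one_smul hτ hm₀
  have hshift := zpow_apply_smul_eq_comp hτ (i - 1) (X + 1) m₀
  rw [← Equiv.Perm.smul_def, MulAction.mem_fixedBy_zpow hfix (i - 1)] at hshift
  rw [hshift]
  congr 1
  simp only [add_comp, X_comp, one_comp, map_intCast]
  push_cast
  ring

end ShiftedAutomorphism

namespace Bprime

variable {k : Type*} [Field k]

noncomputable def gen (i : ℤ) : Bprime k :=
  ⟨(RatFunc.X + (i : RatFunc k))⁻¹, Submodule.subset_span ⟨i, rfl⟩⟩

@[simp]
theorem coe_gen (i : ℤ) : ((gen i : Bprime k) : RatFunc k) = (RatFunc.X + (i : RatFunc k))⁻¹ := rfl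

theorem span_range_gen : Submodule.span k[X] (Set.range (gen (k := k))) = ⊤ := by
  refine Eq.trans ?_ (Submodule.span_span_coe_preimage (R := k[X])
    (s := {x : RatFunc k | ∃ i : ℤ, x = (RatFunc.X + (i : RatFunc k))⁻¹}))
  congr 1
  ext x
  exact ⟨fun ⟨i, hi⟩ => ⟨i, congrArg Subtype.val hi.symm⟩, fun ⟨i, hi⟩ => ⟨i, Subtype.ext hi.symm⟩⟩

theorem linearCombination_gen_surjective :
    Function.Surjective (Finsupp.linearCombination k[X] (gen (k := k))) := by
  rw [← LinearMap.range_eq_top, Finsupp.range_linearCombination, span_range_gen]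

theorem X_add_C_smul_coe_gen (i : ℤ) : (X + C (i : k)) • ((gen i : Bprime k) : RatFunc k) = 1 := by
  rw [coe_gen, Algebra.smul_def, RatFunc.algebraMap_X_add_C_intCast, mul_inv_cancel₀]
  rw [← RatFunc.algebraMap_X_add_C_intCast]
  exact (map_ne_zero_iff _ (RatFunc.algebraMap_injective k)).mpr (X_add_C_ne_zero _)

section Shift

variable (σ : RatFunc k →ₐ[k] RatFunc k) {a : ℤ}
  (hσ : σ RatFunc.X = RatFunc.X + (a : RatFunc k))
include hσ

theorem map_smul_of_map_X (f : k[X]) (x : RatFunc k) :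
    σ (f • x) = f.comp (X + C (a : k)) • σ x :=
  RatFunc.map_smul_eq_comp_smul σ (hσ.trans (RatFunc.algebraMap_X_add_C_intCast a).symm) f x

theorem map_coe_gen (i : ℤ) : σ (gen i : Bprime k) = (gen (i + a) : Bprime k) := by
  rw [coe_gen, coe_gen, map_inv₀, map_add, hσ, map_intCast, Int.cast_add, add_assoc,
    add_comm (a : RatFunc k)]

theorem map_mem {x : RatFunc k} (hx : x ∈ Bprime k) : σ x ∈ Bprime k := by
  induction hx using Submodule.span_induction with
  | mem x hx =>
    obtain ⟨i, rfl⟩ := hx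
    exact map_coe_gen σ hσ i ▸ (gen (i + a)).2
  | zero => simp
  | add x y _ _ hx hy => simpa using add_mem hx hy
  | smul f x _ hx => simpa [map_smul_of_map_X σ hσ] using Submodule.smul_mem _ _ hx

noncomputable def shift : Bprime k →ₛₗ[compRingHom (X + C (a : k))] Bprime k where
  toFun x := ⟨σ x.1, map_mem σ hσ x.2⟩
  map_add' x y := Subtype.ext (map_add σ x.1 y.1)
  map_smul' f x := Subtype.ext (map_smul_of_map_X σ hσ f x.1)

theorem shift_gen (i : ℤ) : shift σ hσ (gen i) = gen (i + a) :=
  Subtype.ext (map_coe_gen σ hσ i)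

omit hσ in
theorem bijOn (σ : RatFunc k ≃ₐ[k] RatFunc k) (hσ : σ RatFunc.X = RatFunc.X + (a : RatFunc k)) :
    Set.BijOn σ (Bprime k) (Bprime k) := by
  have hσsymm : σ.symm RatFunc.X = RatFunc.X + ((-a : ℤ) : RatFunc k) := by
    rw [σ.symm_apply_eq, map_add, hσ, map_intCast]
    push_cast
    ring
  exact ⟨fun _ hx => map_mem σ.toAlgHom hσ hx, σ.injective.injOn,
    fun y hy => ⟨σ.symm y, map_mem σ.symm.toAlgHom hσsymm hy, σ.apply_symm_apply y⟩⟩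

end Shift

variable [CharZero k] {M : Type*} [AddCommGroup M] [Module k[X] M]

theorem ker_linearCombination_gen_le (m : ℤ → M) (c : M)
    (hm : ∀ i : ℤ, (X + C (i : k)) • m i = c) :
    LinearMap.ker (Finsupp.linearCombination k[X] (gen (k := k))) ≤
      LinearMap.ker (Finsupp.linearCombination k[X] m) := by
  intro g hg
  rw [LinearMap.mem_ker, Finsupp.linearCombination_apply, Finsupp.sum] at hg ⊢
  replace hg := congrArg Subtype.val hg
  push_cast at hg
  have hres := eval_neg_eq_zero_of_sum_smul_inv_X_add_eq_zero g.support g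
    (by simpa only [coe_gen] using hg)
  set q : ℤ → k[X] := fun i => g i /ₘ (X - C (-(i : k)))
  have hq : ∀ i ∈ g.support, g i = q i * (X + C (i : k)) := fun i hi => by
    simpa [q, mul_comm] using (mul_divByMonic_eq_iff_isRoot.mpr (hres i hi)).symm
  have hsum : ∑ i ∈ g.support, q i = 0 := by
    apply RatFunc.algebraMap_injective k
    rw [map_zero, ← hg, map_sum]
    refine Finset.sum_congr rfl fun i hi => ?_
    rw [hq i hi, mul_smul, X_add_C_smul_coe_gen, Algebra.smul_def, mul_one]
  calc ∑ i ∈ g.support, g i • m i = ∑ i ∈ g.support, q i • c :=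
        Finset.sum_congr rfl fun i hi => by rw [hq i hi, mul_smul, hm]
    _ = 0 := by rw [← Finset.sum_smul, hsum, zero_smul]

theorem exists_linearMap_gen_eq (m : ℤ → M) (c : M) (hm : ∀ i : ℤ, (X + C (i : k)) • m i = c) :
    ∃ φ : Bprime k →ₗ[k[X]] M, ∀ i, φ (gen i) = m i := by
  obtain ⟨φ, hφ⟩ := LinearMap.exists_comp_eq_of_surjective_of_ker_le
    linearCombination_gen_surjective (ker_linearCombination_gen_le m c hm)
  exact ⟨φ, fun i => by simpa using LinearMap.congr_fun hφ (Finsupp.single i 1)⟩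

theorem existsUnique_linearMap_gen_one_eq (σ : RatFunc k →ₐ[k] RatFunc k)
    (hσ : σ RatFunc.X = RatFunc.X + ((1 : ℤ) : RatFunc k)) {τ : M ≃+ M}
    (hτ : ∀ (f : k[X]) (m : M), τ (f • m) = f.comp (X + 1) • τ m) {m₀ : M}
    (hm₀ : ((X : k[X]) + 1) • m₀ = (X : k[X]) • τ.symm m₀) :
    ∃! φ : Bprime k →ₗ[k[X]] M, φ (gen 1) = m₀ ∧ ∀ x, φ (shift σ hσ x) = τ (φ x) := by
  obtain ⟨φ, hφ⟩ := exists_linearMap_gen_eq (fun i => ((τ : M ≃ M) ^ (i - 1)) m₀) _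
    (X_add_C_smul_zpow_apply hτ hm₀)
  refine ⟨φ, ⟨by simp [hφ], fun x => ?_⟩, fun ψ ⟨hψ₁, hψ⟩ => ?_⟩
  · have hx : x ∈ Submodule.span k[X] (Set.range gen) :=
      span_range_gen (k := k) ▸ Submodule.mem_top
    induction hx using Submodule.span_induction with
    | mem x hx =>
      obtain ⟨i, rfl⟩ := hx
      rw [shift_gen, hφ, hφ, add_sub_cancel_right, ← AddEquiv.coe_toEquiv,
        ← Equiv.Perm.mul_apply, ← zpow_one_add, add_sub_cancel]
    | zero => simp
    | add x y _ _ hx hy => simp [hx, hy]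
    | smul f x _ hx => simp [hx, hτ]
  · refine LinearMap.ext_on_range span_range_gen fun i => ?_
    have hψgen := zpow_smul_eq_of_forall_succ (τ : M ≃ M) (x := fun i => ψ (gen (i + 1)))
      (fun i => by simp [← hψ, shift_gen]) (i - 1)
    simpa [hφ, hψ₁] using hψgen

end Bprime

/-- The automorphism `σ` of `k(s)` with `σ(s) = s+1` restricts to a bijection of `𝔅'` onto
itself, and `(𝔅', σ|𝔅', 1/(s+1))` is universal: for every `k[s]`-module `M`, every additive
bijection `τ : M → M` with `τ(f·m) = σ(f)·τ(m)`, and every `m₀ ∈ M` with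
`(s+1)·m₀ = s·τ⁻¹(m₀)`, there is a unique `k[s]`-linear `φ : 𝔅' → M` with `φ(1/(s+1)) = m₀`
and `φ ∘ σ|𝔅' = τ ∘ φ`. -/
theorem stmt1 (k : Type*) [Field k] [CharZero k]
    (σ : RatFunc k ≃ₐ[k] RatFunc k) (hσX : σ RatFunc.X = RatFunc.X + 1) :
    Set.BijOn σ (Bprime k) (Bprime k) ∧
    ∀ (hmem : ∀ x ∈ Bprime k, σ x ∈ Bprime k)
      (h1 : ((RatFunc.X : RatFunc k) + 1)⁻¹ ∈ Bprime k)
      (M : Type*) [AddCommGroup M] [Module (Polynomial k) M]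
      (τ : M ≃+ M)
      (hτ : ∀ (f : Polynomial k) (m : M),
        τ (f • m) = (Polynomial.aeval (Polynomial.X + 1 : Polynomial k) f) • τ m)
      (m₀ : M)
      (hm₀ : ((Polynomial.X : Polynomial k) + 1) • m₀ = (Polynomial.X : Polynomial k) • τ.symm m₀),
      ∃! φ : Bprime k →ₗ[Polynomial k] M,
        φ ⟨((RatFunc.X : RatFunc k) + 1)⁻¹, h1⟩ = m₀ ∧
        ∀ x : Bprime k, φ ⟨σ x, hmem x x.2⟩ = τ (φ x) := by
  have hσ : σ RatFunc.X = RatFunc.X + ((1 : ℤ) : RatFunc k) := by rw [hσX, Int.cast_one]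
  refine ⟨Bprime.bijOn σ hσ, fun hmem h1 M _ _ τ hτ m₀ hm₀ => ?_⟩
  have hgen : (⟨(RatFunc.X + 1)⁻¹, h1⟩ : Bprime k) = Bprime.gen 1 := by
    ext; simp
  rw [hgen]
  exact Bprime.existsUnique_linearMap_gen_one_eq σ.toAlgHom hσ
    (fun f m => by rw [hτ, comp_eq_aeval]) hm₀
end

section
/- Every k[s]-linear map from 𝔅' to k[s] is zero; that is, Hom_{k[s]}(𝔅', k[s]) = 0. -/
set_option linter.unusedSectionVars false

section aux
variable (k : Type*) [Field k] [CharZero k]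

lemma alg_eq (i : ℤ) :
    algebraMap (Polynomial k) (RatFunc k) (Polynomial.X + (i : Polynomial k))
      = RatFunc.X + (i : RatFunc k) := by
  simp [map_add, RatFunc.algebraMap_X]

lemma poly_ne (i : ℤ) : (Polynomial.X + (i : Polynomial k)) ≠ 0 := by
  have : ((i : Polynomial k)) = Polynomial.C ((i : k)) := by
    simp [Polynomial.C_eq_intCast]
  rw [this]
  exact Polynomial.X_add_C_ne_zero _

lemma rat_ne (i : ℤ) : (RatFunc.X + (i : RatFunc k)) ≠ 0 := by
  rw [← alg_eq]
  simpa using (RatFunc.algebraMap_ne_zero (poly_ne k i))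

lemma gen_mem (i : ℤ) : (RatFunc.X + (i : RatFunc k))⁻¹ ∈ Bprime k :=
  Submodule.subset_span ⟨i, rfl⟩

lemma smul_gen (i : ℤ) :
    (Polynomial.X + (i : Polynomial k)) • (RatFunc.X + (i : RatFunc k))⁻¹ = (1 : RatFunc k) := by
  rw [Algebra.smul_def, alg_eq, mul_inv_cancel₀ (rat_ne k i)]

lemma one_mem' : (1 : RatFunc k) ∈ Bprime k := by
  rw [← smul_gen k 0]
  exact Submodule.smul_mem _ _ (gen_mem k 0)

end aux

/-- Every `k[s]`-linear map from `𝔅'` to `k[s]` is zero: `Hom_{k[s]}(𝔅', k[s]) = 0`. -/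
theorem stmt2 (k : Type*) [Field k] [CharZero k]
    (φ : Bprime k →ₗ[Polynomial k] Polynomial k) : φ = 0 := by
  set p : Polynomial k := φ ⟨1, one_mem' k⟩ with hp
  have key : ∀ i : ℤ, (Polynomial.X + (i : Polynomial k)) * φ ⟨_, gen_mem k i⟩ = p := by
    intro i
    have : (Polynomial.X + (i : Polynomial k)) • (⟨_, gen_mem k i⟩ : Bprime k)
        = ⟨1, one_mem' k⟩ := by
      ext
      exact smul_gen k i
    calc (Polynomial.X + (i : Polynomial k)) * φ ⟨_, gen_mem k i⟩
        = φ ((Polynomial.X + (i : Polynomial k)) • ⟨_, gen_mem k i⟩) := (φ.map_smul _ _).symm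
      _ = p := by rw [this]
  have hp0 : p = 0 := by
    apply Polynomial.eq_zero_of_infinite_isRoot
    have hsub : Set.range (fun i : ℤ => (-i : k)) ⊆ {x | p.IsRoot x} := by
      rintro x ⟨i, rfl⟩
      have hdvd : Polynomial.X - Polynomial.C (-(i : k)) ∣ p := by
        refine ⟨φ ⟨_, gen_mem k i⟩, ?_⟩
        rw [← key i]
        congr 1
        simp [Polynomial.C_eq_intCast, sub_neg_eq_add]
      exact (Polynomial.dvd_iff_isRoot).mp hdvd
    exact Set.Infinite.mono hsub (Set.infinite_range_of_injective (fun a b h => by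
      have : (a : k) = b := neg_inj.mp h
      exact_mod_cast this))
  have gen0 : ∀ i : ℤ, φ ⟨_, gen_mem k i⟩ = 0 := by
    intro i
    have := key i
    rw [hp0] at this
    rcases mul_eq_zero.mp this with h | h
    · exact absurd h (poly_ne k i)
    · exact h
  refine LinearMap.ext fun x => ?_
  rw [LinearMap.zero_apply]
  obtain ⟨y, hy⟩ := x
  refine Submodule.span_induction (p := fun y hy => φ ⟨y, hy⟩ = 0) ?_ ?_ ?_ ?_ hy
  · rintro y ⟨i, rfl⟩
    exact gen0 i
  · exact map_zero φ
  · intro a b ha hb iha ihb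
    exact show φ (⟨a, ha⟩ + ⟨b, hb⟩) = 0 by rw [map_add, iha, ihb, add_zero]
  · intro c a ha iha
    exact show φ (c • ⟨a, ha⟩) = 0 by rw [map_smul, iha, smul_zero]
end

section
/- For every α ∈ k and every integer n ≥ 1, the k[s]/((s−α)^n)-module 𝔅' ⊗_{k[s]} k[s]/((s−α)^n) is free of rank 1; moreover, when α = i is an integer, the element (1/(s−i)) ⊗ 1 is a generator. -/
open TensorProduct

namespace Stmt6Aux

open Polynomial

variable {k : Type*} [Field k]

lemma icast_eq (i : ℤ) : ((i : RatFunc k)) = algebraMap (Polynomial k) (RatFunc k) (C (i : k)) := by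
  rw [C_eq_intCast, map_intCast]

lemma gen_eq (i : ℤ) :
    (RatFunc.X : RatFunc k) + (i : RatFunc k)
      = algebraMap (Polynomial k) (RatFunc k) (X + C (i : k)) := by
  rw [map_add, RatFunc.algebraMap_X, icast_eq]

lemma sub_gen_eq (i : ℤ) :
    (RatFunc.X : RatFunc k) - (i : RatFunc k)
      = algebraMap (Polynomial k) (RatFunc k) (X - C (i : k)) := by
  rw [map_sub, RatFunc.algebraMap_X, icast_eq]

lemma XC_ne (i : k) : (X + C i : Polynomial k) ≠ 0 := (monic_X_add_C i).ne_zero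

lemma one_mem_B : (1 : RatFunc k) ∈ Bprime k := by
  have h0 : (RatFunc.X : RatFunc k)⁻¹ ∈ Bprime k := by
    apply Submodule.subset_span
    exact ⟨0, by push_cast; ring⟩
  have := Submodule.smul_mem (Bprime k) (X : Polynomial k) h0
  have hX : (RatFunc.X : RatFunc k) ≠ 0 := by
    rw [← RatFunc.algebraMap_X]
    exact RatFunc.algebraMap_ne_zero X_ne_zero
  rwa [Algebra.smul_def, RatFunc.algebraMap_X, mul_inv_cancel₀ hX] at this

lemma lemA (α : k) {b : RatFunc k} (hb : b ∈ Bprime k) :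
    ∃ c d : Polynomial k, d.eval α ≠ 0 ∧
      algebraMap (Polynomial k) (RatFunc k) ((X - C α) * d) * b
        = algebraMap (Polynomial k) (RatFunc k) c := by
  induction hb using Submodule.span_induction with
  | mem x hx =>
      obtain ⟨i, rfl⟩ := hx
      rw [gen_eq]
      by_cases h : (i : k) = -α
      · refine ⟨1, 1, by simp, ?_⟩
        have hX : (X : Polynomial k) + C (i : k) = X - C α := by rw [h, map_neg]; ring
        rw [hX, mul_one, map_one]
        exact mul_inv_cancel₀ (RatFunc.algebraMap_ne_zero (X_sub_C_ne_zero α))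
      · refine ⟨X - C α, X + C (i : k), ?_, ?_⟩
        · simp only [eval_add, eval_X, eval_C]
          exact fun hc => h (eq_neg_of_add_eq_zero_right hc)
        · rw [map_mul, mul_assoc, mul_inv_cancel₀ (RatFunc.algebraMap_ne_zero (XC_ne _)), mul_one]
  | zero => exact ⟨0, 1, by simp, by simp⟩
  | add x y hx hy ihx ihy =>
      obtain ⟨c1, d1, hd1, e1⟩ := ihx
      obtain ⟨c2, d2, hd2, e2⟩ := ihy
      refine ⟨c1 * d2 + c2 * d1, d1 * d2, by simp [hd1, hd2], ?_⟩
      simp only [map_mul, map_add] at e1 e2 ⊢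
      linear_combination (algebraMap (Polynomial k) (RatFunc k) d2) * e1
        + (algebraMap (Polynomial k) (RatFunc k) d1) * e2
  | smul p x hx ih =>
      obtain ⟨c, d, hd, e⟩ := ih
      refine ⟨p * c, d, hd, ?_⟩
      rw [Algebra.smul_def]
      simp only [map_mul] at e ⊢
      linear_combination (algebraMap (Polynomial k) (RatFunc k) p) * e

lemma lemA' (α : k) (hα : ∀ i : ℤ, α ≠ (i : k)) {b : RatFunc k} (hb : b ∈ Bprime k) :
    ∃ c d : Polynomial k, d.eval α ≠ 0 ∧
      algebraMap (Polynomial k) (RatFunc k) d * b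
        = algebraMap (Polynomial k) (RatFunc k) c := by
  induction hb using Submodule.span_induction with
  | mem x hx =>
      obtain ⟨i, rfl⟩ := hx
      rw [gen_eq]
      refine ⟨1, X + C (i : k), ?_, ?_⟩
      · simp only [eval_add, eval_X, eval_C]
        intro hc
        exact hα (-i) (by push_cast; exact eq_neg_of_add_eq_zero_left hc)
      · rw [map_one]
        exact mul_inv_cancel₀ (RatFunc.algebraMap_ne_zero (XC_ne _))
  | zero => exact ⟨0, 1, by simp, by simp⟩
  | add x y hx hy ihx ihy =>
      obtain ⟨c1, d1, hd1, e1⟩ := ihx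
      obtain ⟨c2, d2, hd2, e2⟩ := ihy
      refine ⟨c1 * d2 + c2 * d1, d1 * d2, by simp [hd1, hd2], ?_⟩
      simp only [map_mul, map_add] at e1 e2 ⊢
      linear_combination (algebraMap (Polynomial k) (RatFunc k) d2) * e1
        + (algebraMap (Polynomial k) (RatFunc k) d1) * e2
  | smul p x hx ih =>
      obtain ⟨c, d, hd, e⟩ := ih
      refine ⟨p * c, d, hd, ?_⟩
      rw [Algebra.smul_def]
      simp only [map_mul] at e ⊢
      linear_combination (algebraMap (Polynomial k) (RatFunc k) p) * e

lemma coprime_of_eval (α : k) {d : Polynomial k} (hd : d.eval α ≠ 0) :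
    IsCoprime (X - C α) d :=
  (irreducible_X_sub_C α).coprime_iff_not_dvd.mpr fun h => hd (dvd_iff_isRoot.mp h)

lemma lemB_int (α : k) (n : ℕ) {b : RatFunc k} (hb : b ∈ Bprime k) {p : Polynomial k}
    (h : algebraMap (Polynomial k) (RatFunc k) p
          * (algebraMap (Polynomial k) (RatFunc k) (X - C α))⁻¹
        = algebraMap (Polynomial k) (RatFunc k) ((X - C α) ^ n) * b) :
    (X - C α) ^ n ∣ p := by
  obtain ⟨c, d, hd, e⟩ := lemA α hb
  set A := algebraMap (Polynomial k) (RatFunc k)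
  have hf : A (X - C α) ≠ 0 := RatFunc.algebraMap_ne_zero (X_sub_C_ne_zero α)
  have hinv : (A (X - C α))⁻¹ * A (X - C α) = 1 := inv_mul_cancel₀ hf
  have key : A (p * d) = A ((X - C α) ^ n * c) := by
    simp only [map_mul] at e h ⊢
    linear_combination (A (X - C α) * A d) * h + A ((X - C α) ^ n) * e
      - (A p * A d) * hinv
  have key2 : p * d = (X - C α) ^ n * c := RatFunc.algebraMap_injective k key
  exact ((coprime_of_eval α hd).pow_left).dvd_of_dvd_mul_right ⟨c, key2⟩

lemma lemB_non (α : k) (hα : ∀ i : ℤ, α ≠ (i : k)) (n : ℕ) {b : RatFunc k}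
    (hb : b ∈ Bprime k) {p : Polynomial k}
    (h : algebraMap (Polynomial k) (RatFunc k) p * 1
        = algebraMap (Polynomial k) (RatFunc k) ((X - C α) ^ n) * b) :
    (X - C α) ^ n ∣ p := by
  obtain ⟨c, d, hd, e⟩ := lemA' α hα hb
  set A := algebraMap (Polynomial k) (RatFunc k)
  have key : A (p * d) = A ((X - C α) ^ n * c) := by
    simp only [map_mul] at e h ⊢
    linear_combination (A d) * h + A ((X - C α) ^ n) * e
  have key2 : p * d = (X - C α) ^ n * c := RatFunc.algebraMap_injective k key
  exact ((coprime_of_eval α hd).pow_left).dvd_of_dvd_mul_right ⟨c, key2⟩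

lemma span_top (α : k) (n : ℕ) (g : ↥(Bprime k))
    (hone : (⟨1, one_mem_B⟩ : ↥(Bprime k)) ⊗ₜ[Polynomial k]
          (Ideal.Quotient.mk (Ideal.span {(X - C α) ^ n}) 1)
        ∈ Submodule.span (Polynomial k)
          {g ⊗ₜ[Polynomial k] (Ideal.Quotient.mk (Ideal.span {(X - C α) ^ n}) 1)})
    (hgen : ∀ (j : ℤ), (j : k) = -α →
        ∀ h : ((RatFunc.X : RatFunc k) + (j : RatFunc k))⁻¹ ∈ Bprime k,
        (⟨((RatFunc.X : RatFunc k) + (j : RatFunc k))⁻¹, h⟩ : ↥(Bprime k)) ⊗ₜ[Polynomial k]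
            (Ideal.Quotient.mk (Ideal.span {(X - C α) ^ n}) 1)
          ∈ Submodule.span (Polynomial k)
            {g ⊗ₜ[Polynomial k] (Ideal.Quotient.mk (Ideal.span {(X - C α) ^ n}) 1)}) :
    Submodule.span (Polynomial k)
      {g ⊗ₜ[Polynomial k] (Ideal.Quotient.mk (Ideal.span {(X - C α) ^ n}) 1)} = ⊤ := by
  set I : Ideal (Polynomial k) := Ideal.span {(X - C α) ^ n} with hI
  set u1 : Polynomial k ⧸ I := Ideal.Quotient.mk I 1 with hu1
  set S := Submodule.span (Polynomial k) {g ⊗ₜ[Polynomial k] u1} with hS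
  have smul_reduce : ∀ (b : ↥(Bprime k)) (r : Polynomial k),
      b ⊗ₜ[Polynomial k] (Ideal.Quotient.mk I r) = (r • b) ⊗ₜ[Polynomial k] u1 := by
    intro b r
    have : (Ideal.Quotient.mk I r) = r • u1 := by
      rw [hu1, ← Ideal.Quotient.mk_eq_mk, ← Ideal.Quotient.mk_eq_mk,
        ← Submodule.Quotient.mk_smul, smul_eq_mul, mul_one]
    rw [this, tmul_smul, smul_tmul']
  have claim : ∀ (x : RatFunc k) (hx : x ∈ Bprime k),
      (⟨x, hx⟩ : ↥(Bprime k)) ⊗ₜ[Polynomial k] u1 ∈ S := by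
    intro x hx
    induction hx using Submodule.span_induction with
    | mem x hxs =>
        obtain ⟨i, rfl⟩ := hxs
        by_cases hc : (i : k) = -α
        · exact hgen i hc _
        · -- (X + C i) is coprime to (X - C α)^n
          have heval : eval α (X + C (i : k)) ≠ 0 := by
            simp only [eval_add, eval_X, eval_C]
            exact fun hc' => hc (eq_neg_of_add_eq_zero_right hc')
          have hcop : IsCoprime ((X - C α) ^ n) (X + C (i : k)) :=
            (coprime_of_eval α heval).pow_left
          obtain ⟨u, v, huv⟩ := hcop
          -- u * (X-Cα)^n + v * (X+Ci) = 1
          have hmk : u1 = Ideal.Quotient.mk I (v * (X + C (i : k))) := by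
            rw [hu1, ← huv, map_add]
            have : Ideal.Quotient.mk I (u * (X - C α) ^ n) = 0 := by
              rw [Ideal.Quotient.eq_zero_iff_mem]
              exact Ideal.mul_mem_left _ u (Ideal.subset_span rfl)
            rw [this, zero_add]
          have hxB : ((RatFunc.X : RatFunc k) + (i : RatFunc k))⁻¹ ∈ Bprime k :=
            Submodule.subset_span ⟨i, rfl⟩
          have hval : ((v * (X + C (i : k))) •
              (⟨((RatFunc.X : RatFunc k) + (i : RatFunc k))⁻¹, hxB⟩ : ↥(Bprime k)))
              = v • (⟨1, one_mem_B⟩ : ↥(Bprime k)) := by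
            apply Subtype.ext
            show (v * (X + C (i : k))) • ((RatFunc.X : RatFunc k) + (i : RatFunc k))⁻¹
              = v • (1 : RatFunc k)
            rw [gen_eq, Algebra.smul_def, Algebra.smul_def, map_mul, mul_assoc,
              mul_inv_cancel₀ (RatFunc.algebraMap_ne_zero (XC_ne _)), mul_one]
          have heq : (⟨((RatFunc.X : RatFunc k) + (i : RatFunc k))⁻¹, hxB⟩ : ↥(Bprime k))
                ⊗ₜ[Polynomial k] u1
              = v • ((⟨1, one_mem_B⟩ : ↥(Bprime k)) ⊗ₜ[Polynomial k] u1) := by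
            conv_lhs => rw [hmk, smul_reduce, hval, ← smul_tmul']
          show (⟨((RatFunc.X : RatFunc k) + (i : RatFunc k))⁻¹, hxB⟩ : ↥(Bprime k))
              ⊗ₜ[Polynomial k] u1 ∈ S
          rw [heq]
          exact S.smul_mem v hone
    | zero =>
        have : (⟨(0 : RatFunc k), Submodule.zero_mem _⟩ : ↥(Bprime k)) = 0 := rfl
        rw [this, zero_tmul]
        exact S.zero_mem
    | add x y hx hy ihx ihy =>
        have : (⟨x + y, Submodule.add_mem _ hx hy⟩ : ↥(Bprime k))
            = ⟨x, hx⟩ + ⟨y, hy⟩ := rfl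
        rw [this, add_tmul]
        exact S.add_mem ihx ihy
    | smul r x hx ih =>
        have : (⟨r • x, Submodule.smul_mem _ r hx⟩ : ↥(Bprime k))
            = r • (⟨x, hx⟩ : ↥(Bprime k)) := rfl
        rw [this, ← smul_tmul']
        exact S.smul_mem r ih
  rw [eq_top_iff]
  rintro z -
  induction z using TensorProduct.induction_on with
  | zero => exact S.zero_mem
  | tmul b q =>
      obtain ⟨r, rfl⟩ := Ideal.Quotient.mk_surjective q
      rw [smul_reduce b r]
      exact claim _ (r • b).2
  | add x y hx hy => exact S.add_mem hx hy

lemma free_rank_one (α : k) (n : ℕ) (g : ↥(Bprime k))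
    (hspan : Submodule.span (Polynomial k)
        {g ⊗ₜ[Polynomial k] (Ideal.Quotient.mk (Ideal.span {(X - C α) ^ n}) 1)} = ⊤)
    (hdvd : ∀ p : Polynomial k, ∀ b : RatFunc k, b ∈ Bprime k →
        algebraMap (Polynomial k) (RatFunc k) p * (g : RatFunc k)
          = algebraMap (Polynomial k) (RatFunc k) ((X - C α) ^ n) * b →
        (X - C α) ^ n ∣ p) :
    Nonempty ((↥(Bprime k) ⊗[Polynomial k]
        (Polynomial k ⧸ Ideal.span {(X - C α) ^ n}))
      ≃ₗ[Polynomial k] Polynomial k ⧸ Ideal.span {(X - C α) ^ n}) := by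
  set I : Ideal (Polynomial k) := Ideal.span {(X - C α) ^ n} with hI
  set N : Submodule (Polynomial k) ↥(Bprime k) := I • ⊤ with hN
  have hle : (I : Submodule (Polynomial k) (Polynomial k)) ≤
      N.comap (LinearMap.toSpanSingleton (Polynomial k) ↥(Bprime k) g) := by
    intro x hx
    exact Submodule.smul_mem_smul hx trivial
  set ψ : (Polynomial k ⧸ I) →ₗ[Polynomial k] (↥(Bprime k) ⧸ N) :=
    Submodule.mapQ _ _ _ hle with hψ
  have hψ_mk : ∀ p : Polynomial k,
      ψ (Ideal.Quotient.mk I p) = Submodule.Quotient.mk (p • g) := by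
    intro p
    rw [hψ, ← Ideal.Quotient.mk_eq_mk, Submodule.mapQ_apply, LinearMap.toSpanSingleton_apply]
  have hsurj : Function.Surjective ψ := by
    intro y
    obtain ⟨b, rfl⟩ := Submodule.Quotient.mk_surjective N y
    have hb : b ⊗ₜ[Polynomial k] (Ideal.Quotient.mk I 1)
        ∈ Submodule.span (Polynomial k) {g ⊗ₜ[Polynomial k] (Ideal.Quotient.mk I 1)} := by
      rw [hspan]; trivial
    obtain ⟨p, hp⟩ := Submodule.mem_span_singleton.mp hb
    refine ⟨Ideal.Quotient.mk I p, ?_⟩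
    have h2 := congrArg (tensorQuotEquivQuotSMul (↥(Bprime k)) I) hp.symm
    rw [map_smul, tensorQuotEquivQuotSMul_tmul_mk, tensorQuotEquivQuotSMul_tmul_mk,
      one_smul, one_smul] at h2
    rw [hψ_mk p, Submodule.Quotient.mk_smul]
    exact h2.symm
  have hinj : Function.Injective ψ := by
    rw [← LinearMap.ker_eq_bot, eq_bot_iff]
    rintro x hx
    obtain ⟨p, rfl⟩ := Ideal.Quotient.mk_surjective x
    rw [LinearMap.mem_ker, hψ_mk, Submodule.Quotient.mk_eq_zero] at hx
    have hrep : ∀ z : ↥(Bprime k), z ∈ N → ∃ b : RatFunc k, b ∈ Bprime k ∧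
        (z : RatFunc k) = algebraMap (Polynomial k) (RatFunc k) ((X - C α) ^ n) * b := by
      intro z hz
      refine Submodule.smul_induction_on hz ?_ ?_
      · intro r hr m _
        obtain ⟨q, hq⟩ := Ideal.mem_span_singleton.mp hr
        refine ⟨((q • m : ↥(Bprime k)) : RatFunc k), (q • m).2, ?_⟩
        show ((r • m : ↥(Bprime k)) : RatFunc k) = _
        simp only [SetLike.val_smul, Algebra.smul_def, map_mul, hq, mul_assoc]
      · rintro x y ⟨b1, hb1, e1⟩ ⟨b2, hb2, e2⟩
        refine ⟨b1 + b2, Submodule.add_mem _ hb1 hb2, ?_⟩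
        show ((x : RatFunc k) + (y : RatFunc k)) = _
        rw [e1, e2, mul_add]
    obtain ⟨b, hbB, hb⟩ := hrep _ hx
    have hval : algebraMap (Polynomial k) (RatFunc k) p * (g : RatFunc k)
        = algebraMap (Polynomial k) (RatFunc k) ((X - C α) ^ n) * b := by
      rw [← hb]
      show _ = ((p • g : ↥(Bprime k)) : RatFunc k)
      simp only [SetLike.val_smul, Algebra.smul_def]
    have hd := hdvd p b hbB hval
    rw [Submodule.mem_bot]
    exact Ideal.Quotient.eq_zero_iff_mem.mpr (Ideal.mem_span_singleton.mpr hd)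
  exact ⟨(tensorQuotEquivQuotSMul (↥(Bprime k)) I).trans
    (LinearEquiv.ofBijective ψ ⟨hinj, hsurj⟩).symm⟩

lemma gen_span (α : k) [CharZero k] (n : ℕ) (i : ℤ) (hi : α = (i : k))
    (h : ((RatFunc.X : RatFunc k) - (i : RatFunc k))⁻¹ ∈ Bprime k) :
    Submodule.span (Polynomial k)
      {(⟨((RatFunc.X : RatFunc k) - (i : RatFunc k))⁻¹, h⟩ : ↥(Bprime k)) ⊗ₜ[Polynomial k]
        (Ideal.Quotient.mk (Ideal.span {(X - C α) ^ n}) 1)} = ⊤ := by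
  set g : ↥(Bprime k) := ⟨((RatFunc.X : RatFunc k) - (i : RatFunc k))⁻¹, h⟩ with hg
  apply span_top
  · have hone_eq : (⟨1, one_mem_B⟩ : ↥(Bprime k)) = (X - C α) • g := by
      apply Subtype.ext
      show (1 : RatFunc k) = (X - C α) • ((RatFunc.X : RatFunc k) - (i : RatFunc k))⁻¹
      rw [sub_gen_eq, Algebra.smul_def, hi]
      exact (mul_inv_cancel₀ (RatFunc.algebraMap_ne_zero (X_sub_C_ne_zero _))).symm
    rw [hone_eq, ← smul_tmul']
    exact Submodule.smul_mem _ _ (Submodule.subset_span rfl)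
  · intro j hj hmemj
    have hji : j = -i := by
      have : (j : k) = ((-i : ℤ) : k) := by push_cast; rw [hj, hi]
      exact_mod_cast this
    subst hji
    have heq : (⟨((RatFunc.X : RatFunc k) + ((-i : ℤ) : RatFunc k))⁻¹, hmemj⟩ : ↥(Bprime k))
        = g := by
      apply Subtype.ext
      show ((RatFunc.X : RatFunc k) + ((-i : ℤ) : RatFunc k))⁻¹
        = ((RatFunc.X : RatFunc k) - (i : RatFunc k))⁻¹
      push_cast
      ring_nf
    rw [heq]
    exact Submodule.subset_span rfl

end Stmt6Aux

/-- For every `α ∈ k` and `n ≥ 1`, the module `𝔅' ⊗_{k[s]} k[s]/((s-α)^n)` is free of rank 1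
over `k[s]/((s-α)^n)` (equivalently, it is isomorphic to `k[s]/((s-α)^n)`); moreover when
`α = i` is an integer, the element `(1/(s-i)) ⊗ 1` is a generator. -/
theorem stmt6 (k : Type*) [Field k] [CharZero k] (α : k) (n : ℕ) (hn : 1 ≤ n)
    (hmem : ∀ i : ℤ, ((RatFunc.X : RatFunc k) - (i : RatFunc k))⁻¹ ∈ Bprime k) :
    Nonempty ((↥(Bprime k) ⊗[Polynomial k]
        (Polynomial k ⧸ Ideal.span {(Polynomial.X - Polynomial.C α) ^ n}))
      ≃ₗ[Polynomial k] Polynomial k ⧸ Ideal.span {(Polynomial.X - Polynomial.C α) ^ n}) ∧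
    ∀ i : ℤ, α = (i : k) →
      Submodule.span (Polynomial k)
        {(⟨((RatFunc.X : RatFunc k) - (i : RatFunc k))⁻¹, hmem i⟩ : ↥(Bprime k)) ⊗ₜ[Polynomial k]
          (Ideal.Quotient.mk (Ideal.span {(Polynomial.X - Polynomial.C α) ^ n}) 1)} = ⊤ := by
  constructor
  · by_cases hint : ∃ i : ℤ, α = (i : k)
    · obtain ⟨i, hi⟩ := hint
      refine Stmt6Aux.free_rank_one α n ⟨((RatFunc.X : RatFunc k) - (i : RatFunc k))⁻¹, hmem i⟩
        (Stmt6Aux.gen_span α n i hi (hmem i)) ?_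
      intro p b hb hval
      apply Stmt6Aux.lemB_int α n hb
      rw [← hval]
      congr 1
      show _ = ((RatFunc.X : RatFunc k) - (i : RatFunc k))⁻¹
      rw [Stmt6Aux.sub_gen_eq, hi]
    · push_neg at hint
      refine Stmt6Aux.free_rank_one α n ⟨1, Stmt6Aux.one_mem_B⟩ ?_ ?_
      · apply Stmt6Aux.span_top
        · exact Submodule.subset_span rfl
        · intro j hj hmemj
          exact absurd (by push_cast; rw [hj, neg_neg] : α = ((-j : ℤ) : k)) (hint (-j))
      · intro p b hb hval
        apply Stmt6Aux.lemB_non α hint n hb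
        rw [← hval]
  · exact fun i hi => Stmt6Aux.gen_span α n i hi (hmem i)
end

section
/- For every α ∈ k and every integer n ≥ 1, there exists an isomorphism of k[s]-modules 𝔅' ⊗_{k[s]} k[s]/((s−α)^n) ≅ E' ⊗_{k[s]} k[s]/((s−α)^n). -/
open TensorProduct

/-- The `k[s]`-submodule `E'` of `k(s)` generated by the elements
`g_m = ∏_{j=0}^{m-1} (s-j)⁻¹` for `m ∈ ℕ`. -/
noncomputable def Eprime (k : Type*) [Field k] : Submodule (Polynomial k) (RatFunc k) :=
  Submodule.span (Polynomial k)
    (Set.range fun m : ℕ =>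
      (∏ j ∈ Finset.range m, ((RatFunc.X : RatFunc k) - (j : RatFunc k)))⁻¹)

namespace Stmt9Aux

open Polynomial Pointwise

variable {k : Type*} [Field k]

/-- `x` has at most simple poles, all located in `A`. -/
def SPoles (A : Set k) (x : RatFunc k) : Prop :=
  ∃ T : Finset k, ↑T ⊆ A ∧ ∃ c : Polynomial k,
    x * algebraMap (Polynomial k) (RatFunc k) (∏ t ∈ T, (X - C t)) =
      algebraMap (Polynomial k) (RatFunc k) c

lemma spoles_of_mem_span {A : Set k} {S : Set (RatFunc k)} (hS : ∀ g ∈ S, SPoles A g)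
    {x : RatFunc k} (hx : x ∈ Submodule.span (Polynomial k) S) : SPoles A x := by
  classical
  induction hx using Submodule.span_induction with
  | mem g hg => exact hS g hg
  | zero => exact ⟨∅, by simp, 0, by simp⟩
  | add x y hx hy ihx ihy =>
      obtain ⟨T₁, hT₁, c₁, hc₁⟩ := ihx
      obtain ⟨T₂, hT₂, c₂, hc₂⟩ := ihy
      refine ⟨T₁ ∪ T₂, ?_, c₁ * ∏ t ∈ T₂ \ T₁, (X - C t) + c₂ * ∏ t ∈ T₁ \ T₂, (X - C t), ?_⟩
      · rw [Finset.coe_union]; exact Set.union_subset hT₁ hT₂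
      · have e₁ : algebraMap (Polynomial k) (RatFunc k) (∏ t ∈ T₁ ∪ T₂, (X - C t))
            = algebraMap (Polynomial k) (RatFunc k) (∏ t ∈ T₁, (X - C t)) *
              algebraMap (Polynomial k) (RatFunc k) (∏ t ∈ T₂ \ T₁, (X - C t)) := by
          rw [← map_mul, ← Finset.prod_union Finset.disjoint_sdiff,
            Finset.union_sdiff_self_eq_union]
        have e₂ : algebraMap (Polynomial k) (RatFunc k) (∏ t ∈ T₁ ∪ T₂, (X - C t))
            = algebraMap (Polynomial k) (RatFunc k) (∏ t ∈ T₂, (X - C t)) *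
              algebraMap (Polynomial k) (RatFunc k) (∏ t ∈ T₁ \ T₂, (X - C t)) := by
          rw [← map_mul, ← Finset.prod_union Finset.disjoint_sdiff,
            Finset.union_sdiff_self_eq_union, Finset.union_comm]
        rw [add_mul, map_add, map_mul, map_mul, ← hc₁, ← hc₂]
        congr 1
        · rw [e₁, ← mul_assoc]
        · rw [e₂, ← mul_assoc]
  | smul q x hx ih =>
      obtain ⟨T, hT, c, hc⟩ := ih
      exact ⟨T, hT, q * c, by rw [Algebra.smul_def, mul_assoc, hc, ← map_mul]⟩

lemma eval_ne_zero_not_dvd {α : k} {D : Polynomial k} (hD : D.eval α ≠ 0) :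
    ¬ (X - C α) ∣ D := by rintro ⟨e, rfl⟩; simp at hD

lemma coprime_aux {α : k} {D : Polynomial k} (n : ℕ) (hD : D.eval α ≠ 0) :
    IsCoprime ((X - C α) ^ n) D :=
  (((prime_X_sub_C α).coprime_iff_not_dvd).2 (eval_ne_zero_not_dvd hD)).pow_left

lemma key1 {α : k} {A : Set k} (hA : α ∉ A) {x : RatFunc k} (hx : SPoles A x)
    {q : Polynomial k} {n : ℕ}
    (h : algebraMap (Polynomial k) (RatFunc k) q
        = algebraMap (Polynomial k) (RatFunc k) ((X - C α) ^ n) * x) :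
    (X - C α) ^ n ∣ q := by
  obtain ⟨T, hT, c, hc⟩ := hx
  have hpoly : q * ∏ t ∈ T, (X - C t) = (X - C α) ^ n * c := by
    apply RatFunc.algebraMap_injective k
    rw [map_mul, map_mul, h, mul_assoc, hc]
  have heval : (∏ t ∈ T, (X - C t : Polynomial k)).eval α ≠ 0 := by
    simp only [eval_prod, eval_sub, eval_X, eval_C]
    exact Finset.prod_ne_zero_iff.2 fun t ht => sub_ne_zero_of_ne (fun h => hA (h ▸ hT ht))
  exact (coprime_aux n heval).dvd_of_dvd_mul_right ⟨c, hpoly⟩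

lemma key2 {α : k} {A : Set k} {x : RatFunc k} (hx : SPoles A x) {q : Polynomial k} {n : ℕ}
    (h : algebraMap (Polynomial k) (RatFunc k) q
        = algebraMap (Polynomial k) (RatFunc k) ((X - C α) ^ (n + 1)) * x) :
    (X - C α) ^ n ∣ q := by
  classical
  obtain ⟨T, hT, c, hc⟩ := hx
  have hpoly : q * ∏ t ∈ T, (X - C t) = (X - C α) ^ (n + 1) * c := by
    apply RatFunc.algebraMap_injective k
    rw [map_mul, map_mul, h, mul_assoc, hc]
  by_cases hαT : α ∈ T
  · have hsplit : (∏ t ∈ T, (X - C t : Polynomial k))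
        = (X - C α) * ∏ t ∈ T.erase α, (X - C t) := (Finset.mul_prod_erase T _ hαT).symm
    rw [hsplit] at hpoly
    have hcancel : q * ∏ t ∈ T.erase α, (X - C t) = (X - C α) ^ n * c := by
      have h2 : (X - C α) * (q * ∏ t ∈ T.erase α, (X - C t))
          = (X - C α) * ((X - C α) ^ n * c) := by linear_combination hpoly
      exact mul_left_cancel₀ (X_sub_C_ne_zero α) h2
    have heval : (∏ t ∈ T.erase α, (X - C t : Polynomial k)).eval α ≠ 0 := by
      simp only [eval_prod, eval_sub, eval_X, eval_C]
      exact Finset.prod_ne_zero_iff.2 fun t ht =>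
        sub_ne_zero_of_ne (Ne.symm (Finset.ne_of_mem_erase ht))
    exact (coprime_aux n heval).dvd_of_dvd_mul_right ⟨c, hcancel⟩
  · have heval : (∏ t ∈ T, (X - C t : Polynomial k)).eval α ≠ 0 := by
      simp only [eval_prod, eval_sub, eval_X, eval_C]
      exact Finset.prod_ne_zero_iff.2 fun t ht =>
        sub_ne_zero_of_ne (fun h => hαT (h ▸ ht))
    exact dvd_trans (pow_dvd_pow _ (Nat.le_succ n))
      ((coprime_aux (n+1) heval).dvd_of_dvd_mul_right ⟨c, hpoly⟩)

lemma gen_span {S : Set (RatFunc k)} {b : RatFunc k} {f : Polynomial k}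
    (hsurj : ∀ g ∈ S, ∃ q : Polynomial k, ∃ y ∈ Submodule.span (Polynomial k) S,
      g = q • b + f • y) :
    ∀ x ∈ Submodule.span (Polynomial k) S, ∃ q : Polynomial k,
      ∃ y ∈ Submodule.span (Polynomial k) S, x = q • b + f • y := by
  intro x hx
  induction hx using Submodule.span_induction with
  | mem g hg => exact hsurj g hg
  | zero => exact ⟨0, 0, Submodule.zero_mem _, by simp⟩
  | add x y hx hy ihx ihy =>
      obtain ⟨q₁, y₁, hy₁, h₁⟩ := ihx
      obtain ⟨q₂, y₂, hy₂, h₂⟩ := ihy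
      refine ⟨q₁ + q₂, y₁ + y₂, Submodule.add_mem _ hy₁ hy₂, ?_⟩
      rw [h₁, h₂, add_smul, smul_add]; ring
  | smul r x hx ih =>
      obtain ⟨q, y, hy, h⟩ := ih
      refine ⟨r * q, r • y, Submodule.smul_mem _ _ hy, ?_⟩
      rw [h, smul_add, smul_smul, smul_comm r f y]

lemma main_equiv (M : Submodule (Polynomial k) (RatFunc k)) (b : RatFunc k) (hb : b ∈ M)
    (f : Polynomial k)
    (hgen : ∀ x ∈ M, ∃ q : Polynomial k, ∃ y ∈ M, x = q • b + f • y)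
    (hkey : ∀ q : Polynomial k, ∀ x ∈ M, q • b = f • x → f ∣ q) :
    Nonempty ((Polynomial k ⧸ Ideal.span {f}) ≃ₗ[Polynomial k]
      (↥M ⧸ (Ideal.span {f} • (⊤ : Submodule (Polynomial k) ↥M)))) := by
  set I : Ideal (Polynomial k) := Ideal.span {f} with hI
  set K : Submodule (Polynomial k) ↥M := I • ⊤ with hK
  set b₀ : ↥M := ⟨b, hb⟩ with hb₀
  set φ : Polynomial k →ₗ[Polynomial k] ↥M ⧸ K :=
    K.mkQ.comp (LinearMap.toSpanSingleton (Polynomial k) ↥M b₀) with hφ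
  have hφ_apply : ∀ q : Polynomial k, φ q = Submodule.Quotient.mk (q • b₀) := fun q => rfl
  have hker₁ : I ≤ LinearMap.ker φ := by
    rw [hI, Ideal.span_le]
    rintro x rfl
    simp only [SetLike.mem_coe, LinearMap.mem_ker, hφ_apply, Submodule.Quotient.mk_eq_zero]
    exact Submodule.smul_mem_smul (Ideal.subset_span rfl) trivial
  have hker₂ : LinearMap.ker φ ≤ I := by
    intro q hq
    rw [LinearMap.mem_ker, hφ_apply, Submodule.Quotient.mk_eq_zero, hK, hI,
      Submodule.ideal_span_singleton_smul] at hq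
    rw [← SetLike.mem_coe, Submodule.coe_pointwise_smul] at hq
    obtain ⟨y, -, hy⟩ := hq
    have : q • b = f • (y : RatFunc k) := by
      have := congrArg (Subtype.val) hy
      simpa using this.symm
    exact Ideal.mem_span_singleton.2 (hkey q y y.2 this)
  have hsurjφ : Function.Surjective φ := by
    intro z
    obtain ⟨x, rfl⟩ := Submodule.Quotient.mk_surjective K z
    obtain ⟨q, y, hy, hxy⟩ := hgen x.1 x.2
    refine ⟨q, ?_⟩
    rw [hφ_apply, Submodule.Quotient.eq]
    have hcoe : q • b₀ - x = -(f • (⟨y, hy⟩ : ↥M)) := by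
      apply Subtype.ext
      simp [hxy, hb₀]
    rw [hcoe]
    exact neg_mem (Submodule.smul_mem_smul (Ideal.subset_span rfl) trivial)
  refine ⟨LinearEquiv.ofBijective (Submodule.liftQ I φ hker₁) ⟨?_, ?_⟩⟩
  · rw [← LinearMap.ker_eq_bot]
    exact Submodule.ker_liftQ_eq_bot I φ hker₁ hker₂
  · intro z
    obtain ⟨q, hq⟩ := hsurjφ z
    exact ⟨Submodule.Quotient.mk q, by rwa [Submodule.liftQ_apply]⟩

lemma surj_gen1 {α : k} (n : ℕ) {M : Submodule (Polynomial k) (RatFunc k)}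
    {g b : RatFunc k} {G : Polynomial k} (hG : G.eval α ≠ 0) (hgM : g ∈ M)
    (hg : algebraMap (Polynomial k) (RatFunc k) G * g = 1)
    (r : Polynomial k) (hb : algebraMap (Polynomial k) (RatFunc k) r * b = 1) :
    ∃ q : Polynomial k, ∃ y ∈ M, g = q • b + ((X - C α) ^ n) • y := by
  obtain ⟨u, a, hua⟩ := coprime_aux n hG
  refine ⟨a * r, u • g, Submodule.smul_mem _ _ hgM, ?_⟩
  have h1 : algebraMap (Polynomial k) (RatFunc k) u *
      algebraMap (Polynomial k) (RatFunc k) ((X - C α) ^ n) +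
      algebraMap (Polynomial k) (RatFunc k) a * algebraMap (Polynomial k) (RatFunc k) G = 1 := by
    rw [← map_mul, ← map_mul, ← map_add, hua, map_one]
  rw [smul_smul, Algebra.smul_def, Algebra.smul_def, map_mul, map_mul]
  linear_combination (-g) * h1 + (algebraMap (Polynomial k) (RatFunc k) a) * hg -
    (algebraMap (Polynomial k) (RatFunc k) a) * hb

lemma surj_gen2 {α : k} (n : ℕ) {M : Submodule (Polynomial k) (RatFunc k)}
    {g b : RatFunc k} {G' : Polynomial k} (hG' : G'.eval α ≠ 0) (hgM : g ∈ M)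
    (hg : algebraMap (Polynomial k) (RatFunc k) ((X - C α) * G') * g = 1)
    (hb : algebraMap (Polynomial k) (RatFunc k) (X - C α) * b = 1) :
    ∃ q : Polynomial k, ∃ y ∈ M, g = q • b + ((X - C α) ^ n) • y := by
  obtain ⟨u, a, hua⟩ := coprime_aux n hG'
  refine ⟨a, u • g, Submodule.smul_mem _ _ hgM, ?_⟩
  have h1 : algebraMap (Polynomial k) (RatFunc k) u *
      algebraMap (Polynomial k) (RatFunc k) ((X - C α) ^ n) +
      algebraMap (Polynomial k) (RatFunc k) a * algebraMap (Polynomial k) (RatFunc k) G' = 1 := by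
    rw [← map_mul, ← map_mul, ← map_add, hua, map_one]
  rw [map_mul] at hg
  rw [smul_smul, Algebra.smul_def, Algebra.smul_def, map_mul]
  linear_combination (-g) * h1 + (algebraMap (Polynomial k) (RatFunc k) a * b) * hg -
    (algebraMap (Polynomial k) (RatFunc k) a *
      algebraMap (Polynomial k) (RatFunc k) G' * g) * hb

/- Generator normalization -/

lemma gen_B_eq (i : ℤ) :
    (RatFunc.X : RatFunc k) + (i : RatFunc k)
      = algebraMap (Polynomial k) (RatFunc k) (X - C (-(i : k))) := by
  rw [map_sub, RatFunc.algebraMap_X, RatFunc.algebraMap_C, map_neg, sub_neg_eq_add,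
    map_intCast (RatFunc.C : k →+* RatFunc k) i]

lemma gen_E_eq (m : ℕ) :
    (∏ j ∈ Finset.range m, ((RatFunc.X : RatFunc k) - (j : RatFunc k)))
      = algebraMap (Polynomial k) (RatFunc k) (∏ j ∈ Finset.range m, (X - C (j : k))) := by
  rw [map_prod]
  refine Finset.prod_congr rfl fun j _ => ?_
  rw [map_sub, RatFunc.algebraMap_X, RatFunc.algebraMap_C,
    map_natCast (RatFunc.C : k →+* RatFunc k) j]

lemma amap_ne_zero {G : Polynomial k} (hG : G ≠ 0) :
    algebraMap (Polynomial k) (RatFunc k) G ≠ 0 :=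
  (map_ne_zero_iff _ (RatFunc.algebraMap_injective k)).2 hG

lemma spoles_inv {A : Set k} {t : k} (ht : t ∈ A) :
    SPoles A ((algebraMap (Polynomial k) (RatFunc k) (X - C t))⁻¹) := by
  refine ⟨{t}, by simpa, 1, ?_⟩
  rw [Finset.prod_singleton, map_one]
  exact inv_mul_cancel₀ (amap_ne_zero (X_sub_C_ne_zero t))

lemma spoles_prod_inv [CharZero k] (m : ℕ) :
    SPoles (Set.range (Nat.cast : ℕ → k))
      ((algebraMap (Polynomial k) (RatFunc k) (∏ j ∈ Finset.range m, (X - C (j : k))))⁻¹) := by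
  classical
  refine ⟨(Finset.range m).image (Nat.cast : ℕ → k), ?_, 1, ?_⟩
  · intro t ht
    simp only [Finset.coe_image, Set.mem_image] at ht
    obtain ⟨j, -, rfl⟩ := ht
    exact ⟨j, rfl⟩
  · rw [Finset.prod_image (fun x _ y _ h => Nat.cast_injective h), map_one]
    refine inv_mul_cancel₀ (amap_ne_zero ?_)
    exact Finset.prod_ne_zero_iff.2 fun j _ => X_sub_C_ne_zero _

end Stmt9Aux

open Stmt9Aux Polynomial in
/-- Equivalence for `Bprime`. -/
lemma equiv_B {k : Type*} [Field k] [CharZero k] (α : k) (n : ℕ) :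
    Nonempty ((Polynomial k ⧸ Ideal.span {(X - C α) ^ n}) ≃ₗ[Polynomial k]
      (↥(Bprime k) ⧸ (Ideal.span {(X - C α) ^ n} •
        (⊤ : Submodule (Polynomial k) ↥(Bprime k))))) := by
  set S : Set (RatFunc k) :=
    {x : RatFunc k | ∃ i : ℤ, x = (RatFunc.X + (i : RatFunc k))⁻¹} with hS
  have hMS : Bprime k = Submodule.span (Polynomial k) S := rfl
  have hSP : ∀ g ∈ S, SPoles (Set.range (Int.cast : ℤ → k)) g := by
    rintro g ⟨i, rfl⟩
    rw [gen_B_eq i]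
    exact spoles_inv ⟨-i, by push_cast; ring⟩
  by_cases hα : α ∈ Set.range (Int.cast : ℤ → k)
  · -- α is an integer: b = 1/(X - α)
    obtain ⟨j, hj⟩ := hα
    set b : RatFunc k := (RatFunc.X + ((-j : ℤ) : RatFunc k))⁻¹ with hbdef
    have hb : b ∈ Bprime k := Submodule.subset_span ⟨-j, rfl⟩
    have hbeq : (RatFunc.X : RatFunc k) + ((-j : ℤ) : RatFunc k)
        = algebraMap (Polynomial k) (RatFunc k) (X - C α) := by
      rw [gen_B_eq (-j)]
      congr 2
      push_cast
      rw [← hj]; ring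
    have hbid : algebraMap (Polynomial k) (RatFunc k) (X - C α) * b = 1 := by
      rw [hbdef, hbeq]
      exact mul_inv_cancel₀ (amap_ne_zero (X_sub_C_ne_zero α))
    refine main_equiv (Bprime k) b hb ((X - C α) ^ n) ?_ ?_
    · rw [hMS]
      apply gen_span
      rintro g ⟨i, rfl⟩
      by_cases hi : i = -j
      · subst hi
        exact ⟨1, 0, Submodule.zero_mem _, by simp [hbdef]⟩
      · refine surj_gen1 n (G := X - C (-(i : k))) ?_ (Submodule.subset_span ⟨i, rfl⟩)
          ?_ (X - C α) hbid
        · simp only [eval_sub, eval_X, eval_C]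
          refine sub_ne_zero_of_ne fun h => hi ?_
          have : (i : k) = ((-j : ℤ) : k) := by push_cast; rw [← hj] at h; linear_combination h
          exact_mod_cast Int.cast_injective this
        · rw [← gen_B_eq i]
          exact mul_inv_cancel₀ (by
            rw [gen_B_eq i]; exact amap_ne_zero (X_sub_C_ne_zero _))
    · intro q x hx hqx
      rw [Algebra.smul_def, Algebra.smul_def] at hqx
      refine key2 (A := Set.range (Int.cast : ℤ → k))
        (spoles_of_mem_span hSP (hMS ▸ hx)) (n := n) ?_
      calc algebraMap (Polynomial k) (RatFunc k) q
          = algebraMap (Polynomial k) (RatFunc k) q *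
            (algebraMap (Polynomial k) (RatFunc k) (X - C α) * b) := by rw [hbid, mul_one]
        _ = algebraMap (Polynomial k) (RatFunc k) (X - C α) *
            (algebraMap (Polynomial k) (RatFunc k) q * b) := by ring
        _ = algebraMap (Polynomial k) (RatFunc k) (X - C α) *
            (algebraMap (Polynomial k) (RatFunc k) ((X - C α) ^ n) * x) := by rw [hqx]
        _ = algebraMap (Polynomial k) (RatFunc k) ((X - C α) ^ (n + 1)) * x := by
            rw [pow_succ', map_mul, mul_assoc]
  · -- α is not an integer: b = 1
    have hb : (1 : RatFunc k) ∈ Bprime k := by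
      have h0 : (RatFunc.X + ((0 : ℤ) : RatFunc k))⁻¹ ∈ Bprime k :=
        Submodule.subset_span ⟨0, rfl⟩
      have h1 : (X : Polynomial k) • ((RatFunc.X : RatFunc k) + ((0 : ℤ) : RatFunc k))⁻¹
          = 1 := by
        rw [Algebra.smul_def, RatFunc.algebraMap_X]
        push_cast
        rw [add_zero]
        exact mul_inv_cancel₀ RatFunc.X_ne_zero
      exact h1 ▸ Submodule.smul_mem _ _ h0
    refine main_equiv (Bprime k) 1 hb ((X - C α) ^ n) ?_ ?_
    · rw [hMS]
      apply gen_span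
      rintro g ⟨i, rfl⟩
      refine surj_gen1 n (G := X - C (-(i : k))) ?_ (Submodule.subset_span ⟨i, rfl⟩)
        ?_ 1 (by rw [map_one, one_mul])
      · simp only [eval_sub, eval_X, eval_C]
        refine sub_ne_zero_of_ne fun h => hα ?_
        exact ⟨-i, by push_cast; rw [h]⟩
      · rw [← gen_B_eq i]
        exact mul_inv_cancel₀ (by rw [gen_B_eq i]; exact amap_ne_zero (X_sub_C_ne_zero _))
    · intro q x hx hqx
      rw [Algebra.smul_def, Algebra.smul_def, mul_one] at hqx
      exact key1 hα (spoles_of_mem_span hSP (hMS ▸ hx)) hqx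

open Stmt9Aux Polynomial in
/-- Equivalence for `Eprime`. -/
lemma equiv_E {k : Type*} [Field k] [CharZero k] (α : k) (n : ℕ) :
    Nonempty ((Polynomial k ⧸ Ideal.span {(X - C α) ^ n}) ≃ₗ[Polynomial k]
      (↥(Eprime k) ⧸ (Ideal.span {(X - C α) ^ n} •
        (⊤ : Submodule (Polynomial k) ↥(Eprime k))))) := by
  classical
  set S : Set (RatFunc k) := Set.range fun m : ℕ =>
    (∏ j ∈ Finset.range m, ((RatFunc.X : RatFunc k) - (j : RatFunc k)))⁻¹ with hS
  have hMS : Eprime k = Submodule.span (Polynomial k) S := rfl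
  set G : ℕ → Polynomial k := fun m => ∏ j ∈ Finset.range m, (X - C (j : k)) with hG
  have hGne : ∀ m, G m ≠ 0 := fun m =>
    Finset.prod_ne_zero_iff.2 fun j _ => X_sub_C_ne_zero _
  have hgen_eq : ∀ m : ℕ,
      (∏ j ∈ Finset.range m, ((RatFunc.X : RatFunc k) - (j : RatFunc k)))⁻¹
        = (algebraMap (Polynomial k) (RatFunc k) (G m))⁻¹ := fun m => by rw [gen_E_eq m]
  have hginv : ∀ m : ℕ, algebraMap (Polynomial k) (RatFunc k) (G m) *
      (∏ j ∈ Finset.range m, ((RatFunc.X : RatFunc k) - (j : RatFunc k)))⁻¹ = 1 := fun m => by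
    rw [hgen_eq m]
    exact mul_inv_cancel₀ (amap_ne_zero (hGne m))
  have hSP : ∀ g ∈ S, SPoles (Set.range (Nat.cast : ℕ → k)) g := by
    rintro g ⟨m, rfl⟩
    simp only
    rw [hgen_eq m]
    exact spoles_prod_inv m
  by_cases hα : α ∈ Set.range (Nat.cast : ℕ → k)
  · -- α is a natural number: b = 1/(X - α)
    obtain ⟨j₀, hj₀⟩ := hα
    set b : RatFunc k := (algebraMap (Polynomial k) (RatFunc k) (X - C α))⁻¹ with hbdef
    have hbid : algebraMap (Polynomial k) (RatFunc k) (X - C α) * b = 1 :=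
      mul_inv_cancel₀ (amap_ne_zero (X_sub_C_ne_zero α))
    have hsucc : G (j₀ + 1) = G j₀ * (X - C α) := by
      rw [hG]; simp only []
      rw [Finset.prod_range_succ, hj₀]
    have hb : b ∈ Eprime k := by
      have hmem : (G j₀) •
          (∏ j ∈ Finset.range (j₀ + 1), ((RatFunc.X : RatFunc k) - (j : RatFunc k)))⁻¹
          ∈ Eprime k := Submodule.smul_mem _ _ (Submodule.subset_span ⟨j₀ + 1, rfl⟩)
      have heq : (G j₀) •
          (∏ j ∈ Finset.range (j₀ + 1), ((RatFunc.X : RatFunc k) - (j : RatFunc k)))⁻¹ = b := by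
        rw [hgen_eq (j₀ + 1), Algebra.smul_def, hsucc, map_mul, mul_inv, ← mul_assoc,
          mul_inv_cancel₀ (amap_ne_zero (hGne j₀)), one_mul, hbdef]
      exact heq ▸ hmem
    refine main_equiv (Eprime k) b hb ((X - C α) ^ n) ?_ ?_
    · rw [hMS]
      apply gen_span
      rintro g ⟨m, rfl⟩
      simp only
      by_cases hm : j₀ < m
      · -- α is a pole of g_m
        set G' : Polynomial k := ∏ j ∈ (Finset.range m).erase j₀, (X - C (j : k)) with hG'
        have hsplit : G m = (X - C α) * G' := by
          rw [hG, ← hj₀]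
          exact (Finset.mul_prod_erase (Finset.range m) _ (Finset.mem_range.2 hm)).symm
        refine surj_gen2 n (G' := G') ?_ (Submodule.subset_span ⟨m, rfl⟩) ?_ hbid
        · simp only [hG', eval_prod, eval_sub, eval_X, eval_C]
          refine Finset.prod_ne_zero_iff.2 fun j hj => sub_ne_zero_of_ne fun h => ?_
          have : j = j₀ := Nat.cast_injective (by rw [← hj₀] at h; exact h.symm)
          exact Finset.ne_of_mem_erase hj this
        · rw [← hsplit]
          exact hginv m
      · -- α is not a pole of g_m
        refine surj_gen1 n (G := G m) ?_ (Submodule.subset_span ⟨m, rfl⟩) (hginv m)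
          (X - C α) hbid
        · simp only [hG, eval_prod, eval_sub, eval_X, eval_C]
          refine Finset.prod_ne_zero_iff.2 fun j hj => sub_ne_zero_of_ne fun h => ?_
          have : j₀ = j := Nat.cast_injective (by rw [← hj₀] at h; exact h)
          exact hm (this ▸ Finset.mem_range.1 hj)
    · intro q x hx hqx
      rw [Algebra.smul_def, Algebra.smul_def] at hqx
      refine key2 (A := Set.range (Nat.cast : ℕ → k))
        (spoles_of_mem_span hSP (hMS ▸ hx)) (n := n) ?_
      calc algebraMap (Polynomial k) (RatFunc k) q
          = algebraMap (Polynomial k) (RatFunc k) q *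
            (algebraMap (Polynomial k) (RatFunc k) (X - C α) * b) := by rw [hbid, mul_one]
        _ = algebraMap (Polynomial k) (RatFunc k) (X - C α) *
            (algebraMap (Polynomial k) (RatFunc k) q * b) := by ring
        _ = algebraMap (Polynomial k) (RatFunc k) (X - C α) *
            (algebraMap (Polynomial k) (RatFunc k) ((X - C α) ^ n) * x) := by rw [hqx]
        _ = algebraMap (Polynomial k) (RatFunc k) ((X - C α) ^ (n + 1)) * x := by
            rw [pow_succ', map_mul, mul_assoc]
  · -- α is not a natural number: b = 1
    have hb : (1 : RatFunc k) ∈ Eprime k := by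
      have h0 : (∏ j ∈ Finset.range 0, ((RatFunc.X : RatFunc k) - (j : RatFunc k)))⁻¹
          ∈ Eprime k := Submodule.subset_span ⟨0, rfl⟩
      simpa using h0
    refine main_equiv (Eprime k) 1 hb ((X - C α) ^ n) ?_ ?_
    · rw [hMS]
      apply gen_span
      rintro g ⟨m, rfl⟩
      simp only
      refine surj_gen1 n (G := G m) ?_ (Submodule.subset_span ⟨m, rfl⟩) (hginv m)
        1 (by rw [map_one, one_mul])
      · simp only [hG, eval_prod, eval_sub, eval_X, eval_C]
        exact Finset.prod_ne_zero_iff.2 fun j hj =>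
          sub_ne_zero_of_ne fun h => hα ⟨j, h.symm⟩
    · intro q x hx hqx
      rw [Algebra.smul_def, Algebra.smul_def, mul_one] at hqx
      exact key1 hα (spoles_of_mem_span hSP (hMS ▸ hx)) hqx

/-- For every `α ∈ k` and `n ≥ 1` there is an isomorphism of `k[s]`-modules
`𝔅' ⊗_{k[s]} k[s]/((s-α)^n) ≅ E' ⊗_{k[s]} k[s]/((s-α)^n)`. -/
theorem stmt9 (k : Type*) [Field k] [CharZero k] (α : k) (n : ℕ) (hn : 1 ≤ n) :
    Nonempty ((↥(Bprime k) ⊗[Polynomial k]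
        (Polynomial k ⧸ Ideal.span {(Polynomial.X - Polynomial.C α) ^ n}))
      ≃ₗ[Polynomial k]
      (↥(Eprime k) ⊗[Polynomial k]
        (Polynomial k ⧸ Ideal.span {(Polynomial.X - Polynomial.C α) ^ n}))) := by
  obtain ⟨eB⟩ := equiv_B α n
  obtain ⟨eE⟩ := equiv_E α n
  exact ⟨(TensorProduct.tensorQuotEquivQuotSMul (↥(Bprime k))
      (Ideal.span {(Polynomial.X - Polynomial.C α) ^ n})) ≪≫ₗ eB.symm ≪≫ₗ eE ≪≫ₗ
    (TensorProduct.tensorQuotEquivQuotSMul (↥(Eprime k))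
      (Ideal.span {(Polynomial.X - Polynomial.C α) ^ n})).symm⟩
end

section
/- The element t̃ − 1 is not a zero divisor in A⁰: if x ∈ A⁰ satisfies (t̃ − 1)·x = 0, then x = 0. -/
/-- The directed set `D` of positive integers coprime to `p`. -/
def Coprimes (p : ℕ) : Type := {n : ℕ // 0 < n ∧ Nat.Coprime n p}

/-- The transition map `π_{m,n} : R[ℤ/m] → R[ℤ/n]` (for `n ∣ m`) induced by the reduction
map `ℤ/m → ℤ/n`. -/
noncomputable def transMap (R : Type*) [CommRing R] {m n : ℕ} (h : n ∣ m) :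
    AddMonoidAlgebra R (ZMod m) →+* AddMonoidAlgebra R (ZMod n) :=
  AddMonoidAlgebra.mapDomainRingHom R ((ZMod.castHom h (ZMod n)).toAddMonoidHom)

/-- The property of being a compatible family, i.e., of lying in the inverse limit
`A⁰ = lim_{n ∈ D} R[ℤ/n]`, realized inside the product ring `∏_{n ∈ D} R[ℤ/n]`. -/
def IsCompatible (R : Type*) [CommRing R] (p : ℕ)
    (x : ∀ n : Coprimes p, AddMonoidAlgebra R (ZMod n.1)) : Prop :=
  ∀ (m n : Coprimes p) (h : n.1 ∣ m.1), transMap R h (x m) = x n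

/-- The element `t̃ ∈ A⁰` whose `n`-th component is the group element `1 ∈ ℤ/n` viewed in
`R[ℤ/n]`. -/
noncomputable def ttilde (R : Type*) [CommRing R] (p : ℕ) :
    ∀ n : Coprimes p, AddMonoidAlgebra R (ZMod n.1) :=
  fun n => AddMonoidAlgebra.single (1 : ZMod n.1) (1 : R)

/-! The relation `t̃ y = y` at level `n ℓ^r` makes all coefficients of `y = x_{n ℓ^r}` equal to
one constant `c`. Reducing to level `n`, each residue class mod `n` has `ℓ^r` lifts, so every
coefficient of `x_n = π(y)` equals `ℓ^r c = 0`. -/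

open AddMonoidAlgebra Finset

theorem Function.Periodic.sum_range_mul {M : Type*} [AddCommMonoid M] {f : ℕ → M} {N : ℕ}
    (hf : Function.Periodic f N) (k : ℕ) :
    ∑ i ∈ range (N * k), f i = k • ∑ i ∈ range N, f i := by
  induction k with
  | zero => simp
  | succ k ih =>
    rw [Nat.mul_succ, sum_range_add, ih, succ_nsmul]
    congr 1
    refine sum_congr rfl fun i _ => ?_
    rw [add_comm, mul_comm]
    exact hf.nat_mul k i

section

variable {R : Type*} [CommRing R]

theorem AddMonoidAlgebra.coeff_eq_coeff_zero_of_single_one_mul_eq {M : ℕ}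
    {y : AddMonoidAlgebra R (ZMod M)} (hy : single 1 1 * y = y) (b : ZMod M) :
    y.coeff b = y.coeff 0 := by
  have hshift (a : ZMod M) : y.coeff (1 + a) = y.coeff a := by
    rw [← one_mul (y.coeff a), ← coeff_single_mul_add, hy]
  obtain ⟨i, rfl⟩ := ZMod.intCast_surjective b
  induction i using Int.induction_on with
  | zero => simp
  | succ i ih => rw [Int.cast_add, Int.cast_one, add_comm, hshift, ih]
  | pred i ih => rw [← ih, ← hshift, Int.cast_sub, Int.cast_one, add_sub_cancel]

theorem AddMonoidAlgebra.eq_sum_range_single_of_coeff_eq {M : ℕ} [NeZero M]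
    {y : AddMonoidAlgebra R (ZMod M)} {c : R} (hy : ∀ b, y.coeff b = c) :
    y = ∑ i ∈ range M, single (i : ZMod M) c := by
  ext b
  rw [hy b, coeff_sum, sum_apply', sum_eq_single b.val]
  · rw [coeff_single, Finsupp.single_apply, if_pos (ZMod.natCast_zmod_val b)]
  · intro i hi hib
    rw [coeff_single, Finsupp.single_apply, if_neg]
    rintro rfl
    exact hib (ZMod.val_cast_of_lt (mem_range.mp hi)).symm
  · exact fun hb => absurd (mem_range.mpr (ZMod.val_lt b)) hb

theorem transMap_single {m n : ℕ} (h : n ∣ m) (a : ZMod m) (r : R) :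
    transMap R h (single a r) = single (ZMod.castHom h (ZMod n) a) r := by
  simp [transMap]

theorem transMap_eq_zero_of_single_one_mul_eq {N k : ℕ} [NeZero (N * k)] (hk : (k : R) = 0)
    {y : AddMonoidAlgebra R (ZMod (N * k))} (hy : single 1 1 * y = y) :
    transMap R (Nat.dvd_mul_right N k) y = 0 := by
  have hperiodic : Function.Periodic (fun i : ℕ => single (i : ZMod N) (y.coeff 0)) N := by
    intro i
    simp
  rw [eq_sum_range_single_of_coeff_eq (coeff_eq_coeff_zero_of_single_one_mul_eq hy), map_sum]
  simp_rw [transMap_single, map_natCast]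
  rw [hperiodic.sum_range_mul, ← Nat.cast_smul_eq_nsmul R, hk, zero_smul]

end

theorem stmt11_general (R : Type*) [CommRing R]
    (ℓ r : ℕ) (hℓ : ℓ.Prime) (hR : (ℓ : R) ^ r = 0)
    (p : ℕ) (hp : p = 1 ∨ (p.Prime ∧ p ≠ ℓ))
    (x : ∀ n : Coprimes p, AddMonoidAlgebra R (ZMod n.1))
    (hx : IsCompatible R p x)
    (h : (ttilde R p - 1) * x = 0) : x = 0 := by
  have hℓp : ℓ.Coprime p := by
    rcases hp with rfl | ⟨hp, hpℓ⟩
    · exact Nat.coprime_one_right ℓ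
    · exact (Nat.coprime_primes hℓ hp).mpr hpℓ.symm
  funext n
  have hpos : 0 < n.1 * ℓ ^ r := Nat.mul_pos n.2.1 (pow_pos hℓ.pos r)
  have : NeZero (n.1 * ℓ ^ r) := ⟨hpos.ne'⟩
  let m : Coprimes p := ⟨n.1 * ℓ ^ r, hpos, n.2.2.mul_left (hℓp.pow_left r)⟩
  have hm : single 1 1 * x m = x m := by
    simpa [ttilde, sub_mul, sub_eq_zero] using congrFun h m
  rw [← hx m n (Nat.dvd_mul_right _ _)]
  exact transMap_eq_zero_of_single_one_mul_eq (by exact_mod_cast hR) hm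

/-- `t̃ - 1` is not a zero divisor in `A⁰`: if `x ∈ A⁰` satisfies `(t̃ - 1)·x = 0`
then `x = 0`. Here `R` is a finite nonzero commutative `ℤ/ℓ^r`-algebra and `p` is either `1`
or a prime different from `ℓ`. -/
theorem stmt11 (R : Type*) [CommRing R] [Finite R] [Nontrivial R]
    (ℓ r : ℕ) (hℓ : ℓ.Prime) (hr : 1 ≤ r) (hR : (ℓ : R) ^ r = 0)
    (p : ℕ) (hp : p = 1 ∨ (p.Prime ∧ p ≠ ℓ))
    (x : ∀ n : Coprimes p, AddMonoidAlgebra R (ZMod n.1))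
    (hx : IsCompatible R p x)
    (h : (ttilde R p - 1) * x = 0) : x = 0 :=
  stmt11_general R ℓ r hℓ hR p hp x hx h
end
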